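/- arXiv:1208.4452 — 2 statements merged into one kernel-verified Lean document; each statement's English description precedes it below -/
import Mathlib

section
/- Let p, q ≥ 2 be integers and a, b odd integers with 0 < a < p, 0 < b < q. Define T(N) = 2^{2N} / ∏_{k=1}^{N} (16 sin²((2k-1)aπ/(2p)) sin²((2k-1)bπ/(2q))). Then lim_{N→∞} log|T(N)| / (2N)² = 0. -/
/-!
Since `a` is odd, `(2k-1)a` is never divisible by `2p`; reducing it modulo `2p` and using the
concavity of `sin` on `[0, π]` gives `|sin ((2k-1)aπ/(2p))| ≥ sin (π/(2p)) > 0`, and likewise for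
`b`. So `T(N) = ∏ₖ 4 / (16 sin² sin²)` is a product of `N` factors from a fixed compact interval
of `(0, ∞)`, whence `log |T(N)| = O(N) = o(N²)`.
-/

open Real Finset Filter

theorem sin_pi_div_le_sin_nat_mul_pi_div {n r : ℕ} (hr : 1 ≤ r) (hrn : r < n) :
    sin (π / n) ≤ sin (r * π / n) := by
  have hn : (0 : ℝ) < n := by exact_mod_cast (by omega : 0 < n)
  have hr' : (1 : ℝ) ≤ r := by exact_mod_cast hr
  have hrn' : (r : ℝ) ≤ n - 1 := by
    rw [le_sub_iff_add_le]; exact_mod_cast hrn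
  have hflip : π - π / n = (n - 1) * π / n := by field_simp
  have hmem : r * π / n ∈ Set.Icc (π / n) (π - π / n) := by
    rw [hflip]
    exact ⟨by gcongr; exact le_mul_of_one_le_left pi_pos.le hr', by gcongr⟩
  have hleft : π / n ∈ Set.Icc 0 π := ⟨by positivity, div_le_self pi_pos.le (by linarith)⟩
  have hright : π - π / n ∈ Set.Icc 0 π := ⟨by linarith [hleft.2], by linarith [hleft.1]⟩
  simpa [sin_pi_sub] using strictConcaveOn_sin_Icc.concaveOn.min_le_of_mem_Icc hleft hright hmem

theorem abs_sin_pi_div_le_abs_sin_int_mul_pi_div {n : ℕ} {m : ℤ} (hm : ¬ (n : ℤ) ∣ m) :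
    |sin (π / n)| ≤ |sin (m * π / n)| := by
  rcases n.eq_zero_or_pos with rfl | hn
  · simp
  have hn' : (1 : ℝ) ≤ n := by exact_mod_cast hn
  rw [abs_of_nonneg (sin_nonneg_of_nonneg_of_le_pi (by positivity) (div_le_self pi_pos.le hn'))]
  obtain ⟨r, hr⟩ := Int.eq_ofNat_of_zero_le (Int.emod_nonneg m (by omega : (n : ℤ) ≠ 0))
  have hrn : (r : ℤ) < n := hr ▸ Int.emod_lt_of_pos m (by omega)
  have hr0 : r ≠ 0 := by
    rintro rfl
    exact hm (Int.dvd_iff_emod_eq_zero.mpr (by simpa using hr))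
  have hm_eq : (m : ℝ) = r + n * (m / n : ℤ) := by
    exact_mod_cast (hr ▸ Int.emod_add_mul_ediv m n).symm
  have harg : (m : ℝ) * π / n = r * π / n + (m / n : ℤ) * π := by
    rw [hm_eq]; field_simp
  rw [harg, sin_add_int_mul_pi, abs_mul, abs_neg_one_zpow, one_mul]
  exact (sin_pi_div_le_sin_nat_mul_pi_div (by omega) (by omega)).trans (le_abs_self _)

theorem sin_pi_div_two_mul_pos {p : ℕ} (hp : 0 < p) : 0 < sin (π / (2 * p)) := by
  have hp' : (1 : ℝ) ≤ p := by exact_mod_cast hp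
  exact sin_pos_of_pos_of_lt_pi (by positivity) (div_lt_self pi_pos (by linarith))

theorem sin_sq_pi_div_two_mul_le_of_odd (p : ℕ) {m : ℤ} (hm : Odd m) :
    sin (π / (2 * p)) ^ 2 ≤ sin (m * π / (2 * p)) ^ 2 := by
  have hdvd : ¬ ((2 * p : ℕ) : ℤ) ∣ m := fun h => Int.not_even_iff_odd.mpr hm <|
    even_iff_two_dvd.mpr ((dvd_mul_right 2 (p : ℤ)).trans (by simpa using h))
  have h := abs_sin_pi_div_le_abs_sin_int_mul_pi_div hdvd
  push_cast at h
  exact sq_le_sq.mpr h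

theorem tendsto_log_abs_prod_Icc_div_sq {u : ℕ → ℝ} {c C : ℝ} (hc : 0 < c)
    (hu : ∀ k, c ≤ u k ∧ u k ≤ C) :
    Tendsto (fun N : ℕ => log |∏ k ∈ Icc 1 N, u k| / (N : ℝ) ^ 2) atTop (nhds 0) := by
  set B := |log c| + |log C|
  have hpos : ∀ k, 0 < u k := fun k => hc.trans_le (hu k).1
  have hlog : ∀ k, |log (u k)| ≤ B := fun k => abs_le.mpr
    ⟨by linarith [neg_abs_le (log c), abs_nonneg (log C), log_le_log hc (hu k).1],
     by linarith [le_abs_self (log C), abs_nonneg (log c), log_le_log (hpos k) (hu k).2]⟩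
  have hprod : ∀ N, log |∏ k ∈ Icc 1 N, u k| = ∑ k ∈ Icc 1 N, log (u k) := fun N => by
    rw [abs_of_pos (prod_pos fun k _ => hpos k), log_prod fun k _ => (hpos k).ne']
  have hsum : ∀ N : ℕ, |∑ k ∈ Icc 1 N, log (u k)| ≤ N * B := fun N =>
    calc |∑ k ∈ Icc 1 N, log (u k)| ≤ ∑ k ∈ Icc 1 N, |log (u k)| := abs_sum_le_sum_abs _ _
      _ ≤ N * B := by simpa using sum_le_card_nsmul (Icc 1 N) _ _ fun k _ => hlog k
  refine squeeze_zero_norm' (a := fun N : ℕ => B / N) (Eventually.of_forall fun N => ?_)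
    (tendsto_const_div_atTop_nhds_zero_nat B)
  rw [hprod]
  rcases N.eq_zero_or_pos with rfl | hN
  · simp
  have hN' : (0 : ℝ) < N := by exact_mod_cast hN
  calc ‖(∑ k ∈ Icc 1 N, log (u k)) / (N : ℝ) ^ 2‖ = |∑ k ∈ Icc 1 N, log (u k)| / (N : ℝ) ^ 2 := by
        rw [Real.norm_eq_abs, abs_div, abs_of_pos (by positivity : (0 : ℝ) < (N : ℝ) ^ 2)]
    _ ≤ N * B / (N : ℝ) ^ 2 := by gcongr; exact hsum N
    _ = B / N := by field_simp

theorem two_pow_two_mul_div_prod_Icc (f : ℕ → ℝ) (N : ℕ) :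
    (2 : ℝ) ^ (2 * N) / ∏ k ∈ Icc 1 N, f k = ∏ k ∈ Icc 1 N, 4 / f k := by
  rw [prod_div_distrib, prod_const, Nat.card_Icc, pow_mul]
  norm_num

theorem stmt_4_general (p q : ℕ) (hp : 2 ≤ p) (hq : 2 ≤ q) (a b : ℤ)
    (ha : Odd a) (hb : Odd b) :
    Filter.Tendsto
      (fun N : ℕ =>
        Real.log |(2 : ℝ) ^ (2 * N) /
          ∏ k ∈ Finset.Icc 1 N,
            (16 * Real.sin ((2 * (k : ℝ) - 1) * (a : ℝ) * Real.pi / (2 * (p : ℝ))) ^ 2 *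
              Real.sin ((2 * (k : ℝ) - 1) * (b : ℝ) * Real.pi / (2 * (q : ℝ))) ^ 2)| /
          (2 * (N : ℝ)) ^ 2)
      Filter.atTop (nhds 0) := by
  set f : ℕ → ℝ := fun k => 16 * sin ((2 * (k : ℝ) - 1) * a * π / (2 * p)) ^ 2 *
    sin ((2 * (k : ℝ) - 1) * b * π / (2 * q)) ^ 2
  set c := 16 * sin (π / (2 * p)) ^ 2 * sin (π / (2 * q)) ^ 2
  have hc : 0 < c := by
    have := sin_pi_div_two_mul_pos (p := p) (by omega)
    have := sin_pi_div_two_mul_pos (p := q) (by omega)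
    positivity
  have hodd : ∀ {m : ℤ}, Odd m → ∀ k : ℕ, Odd ((2 * (k : ℤ) - 1) * m) := fun hm k =>
    Odd.mul ⟨(k : ℤ) - 1, by ring⟩ hm
  have hfc : ∀ k, c ≤ f k := fun k => by
    have h₁ := sin_sq_pi_div_two_mul_le_of_odd p (hodd ha k)
    have h₂ := sin_sq_pi_div_two_mul_le_of_odd q (hodd hb k)
    push_cast at h₁ h₂
    exact mul_le_mul (by gcongr) h₂ (sq_nonneg _) (by positivity)
  have hf16 : ∀ k, f k ≤ 16 := fun k => by
    rw [show f k = 16 * (_ * _) from mul_assoc _ _ _]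
    exact mul_le_of_le_one_right (by norm_num)
      (mul_le_one₀ (sin_sq_le_one _) (sq_nonneg _) (sin_sq_le_one _))
  have hbounds : ∀ k, 1 / 4 ≤ 4 / f k ∧ 4 / f k ≤ 4 / c := fun k =>
    ⟨by rw [le_div_iff₀ (hc.trans_le (hfc k))]; linarith [hf16 k],
     div_le_div_of_nonneg_left (by norm_num) hc (hfc k)⟩
  have := (tendsto_log_abs_prod_Icc_div_sq (by norm_num) hbounds).div_const 4
  rw [zero_div] at this
  refine this.congr fun N => ?_
  rw [two_pow_two_mul_div_prod_Icc]
  ring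

theorem stmt_4 (p q : ℕ) (hp : 2 ≤ p) (hq : 2 ≤ q) (a b : ℤ)
    (ha : Odd a) (hb : Odd b) (ha0 : 0 < a) (hap : (a : ℤ) < p)
    (hb0 : 0 < b) (hbq : (b : ℤ) < q) :
    Filter.Tendsto
      (fun N : ℕ =>
        Real.log |(2 : ℝ) ^ (2 * N) /
          ∏ k ∈ Finset.Icc 1 N,
            (16 * Real.sin ((2 * (k : ℝ) - 1) * (a : ℝ) * Real.pi / (2 * (p : ℝ))) ^ 2 *
              Real.sin ((2 * (k : ℝ) - 1) * (b : ℝ) * Real.pi / (2 * (q : ℝ))) ^ 2)| /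
          (2 * (N : ℝ)) ^ 2)
      Filter.atTop (nhds 0) :=
  stmt_4_general p q hp hq a b ha hb
end

section
/- Let X, Y be 2N×2N complex matrices with X^p = Y^q = -I. Then the 3-term complex 0 → ℂ^{2N} →^{∂₂} ℂ^{2N} ⊕ ℂ^{2N} →^{∂₁} ℂ^{2N} → 0 with ∂₂ = (I + X + ⋯ + X^{p-1}, -(I + Y + ⋯ + Y^{q-1}))ᵀ and ∂₁ = (X - I, Y - I) is exact. -/
/-!
Write `S = I + X + ⋯ + X^{p-1}` and `T = I + Y + ⋯ + Y^{q-1}`. The geometric sum identity turns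
`X^p = Y^q = -I` into `(X - I) S = S (X - I) = -2I` and `(Y - I) T = T (Y - I) = -2I`, so `S`, `T`,
`X - I`, `Y - I` are all invertible with explicit inverses. Then `∂₂` is injective because its first
component `S` is, `∂₁` is surjective because `X - I` is, and a cycle `(u, w)` of `∂₁` is the boundary
of `v = -½ (X - I) u`.
-/

open Matrix Finset

section GeomSum

variable {K R : Type*} [CommRing K] [Ring R] [Algebra K R] {x : R} {n : ℕ}

theorem sub_one_mul_geom_sum_of_pow_eq_neg_one (h : x ^ n = -1) :
    (x - 1) * ∑ i ∈ range n, x ^ i = (-2 : K) • 1 := by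
  rw [mul_geom_sum, h, neg_smul, ofNat_smul_eq_nsmul, nsmul_one, Nat.cast_ofNat]
  norm_num

theorem geom_sum_mul_sub_one_of_pow_eq_neg_one (h : x ^ n = -1) :
    (∑ i ∈ range n, x ^ i) * (x - 1) = (-2 : K) • 1 := by
  rw [geom_sum_mul, h, neg_smul, ofNat_smul_eq_nsmul, nsmul_one, Nat.cast_ofNat]
  norm_num

end GeomSum

namespace Matrix

variable {n K : Type*} [Fintype n] [DecidableEq n] [Field K] {a b s t : Matrix n n K} {c : K}

theorem mulVec_mulVec_of_mul_eq_smul_one (h : a * s = c • 1) (v : n → K) :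
    a *ᵥ (s *ᵥ v) = c • v := by
  rw [mulVec_mulVec, h, smul_mulVec, one_mulVec]

theorem mulVec_injective_of_mul_eq_smul_one (hc : c ≠ 0) (h : a * s = c • 1) :
    Function.Injective (s *ᵥ ·) := fun v₁ v₂ hv => by
  have := congrArg (a *ᵥ ·) hv
  simp only [mulVec_mulVec_of_mul_eq_smul_one h] at this
  exact smul_right_injective _ hc this

theorem mulVec_surjective_of_mul_eq_smul_one (hc : c ≠ 0) (h : a * s = c • 1) :
    Function.Surjective (a *ᵥ ·) := fun w =>
  ⟨c⁻¹ • (s *ᵥ w), by simp [mulVec_smul, mulVec_mulVec_of_mul_eq_smul_one h, smul_smul, hc]⟩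

def boundaryTwo (s t : Matrix n n K) (v : n → K) : (n → K) × (n → K) :=
  (s *ᵥ v, -(t *ᵥ v))

def boundaryOne (a b : Matrix n n K) (uw : (n → K) × (n → K)) : n → K :=
  a *ᵥ uw.1 + b *ᵥ uw.2

theorem boundaryTwo_injective (hc : c ≠ 0) (has : a * s = c • 1) :
    Function.Injective (boundaryTwo s t) := fun _ _ hv =>
  mulVec_injective_of_mul_eq_smul_one hc has (congrArg Prod.fst hv)

theorem boundaryOne_surjective (hc : c ≠ 0) (has : a * s = c • 1) :
    Function.Surjective (boundaryOne a b) := fun w => by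
  obtain ⟨u, rfl⟩ := mulVec_surjective_of_mul_eq_smul_one hc has w
  exact ⟨(u, 0), by simp [boundaryOne]⟩

theorem boundaryOne_boundaryTwo (has : a * s = c • 1) (hbt : b * t = c • 1) (v : n → K) :
    boundaryOne a b (boundaryTwo s t v) = 0 := by
  simp [boundaryOne, boundaryTwo, mulVec_neg, mulVec_mulVec_of_mul_eq_smul_one has,
    mulVec_mulVec_of_mul_eq_smul_one hbt]

theorem exists_boundaryTwo_eq_of_boundaryOne_eq_zero (hc : c ≠ 0) (hsa : s * a = c • 1)
    (htb : t * b = c • 1) {uw : (n → K) × (n → K)} (huw : boundaryOne a b uw = 0) :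
    ∃ v, boundaryTwo s t v = uw := by
  have hau : a *ᵥ uw.1 = -(b *ᵥ uw.2) := eq_neg_of_add_eq_zero_left huw
  refine ⟨c⁻¹ • (a *ᵥ uw.1), Prod.ext ?_ ?_⟩
  · simp [boundaryTwo, mulVec_smul, mulVec_mulVec_of_mul_eq_smul_one hsa, smul_smul, hc]
  · simp [boundaryTwo, hau, mulVec_smul, mulVec_neg, mulVec_mulVec_of_mul_eq_smul_one htb,
      smul_smul, hc]

theorem setOf_boundaryOne_eq_zero (hc : c ≠ 0) (has : a * s = c • 1) (hsa : s * a = c • 1)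
    (hbt : b * t = c • 1) (htb : t * b = c • 1) :
    {uw | boundaryOne a b uw = 0} = Set.range (boundaryTwo s t) := by
  ext uw
  constructor
  · exact exists_boundaryTwo_eq_of_boundaryOne_eq_zero hc hsa htb
  · rintro ⟨v, rfl⟩
    exact boundaryOne_boundaryTwo has hbt v

end Matrix

theorem stmt_16_general (N p q : ℕ)
    (X Y : Matrix (Fin (2 * N)) (Fin (2 * N)) ℂ)
    (hX : X ^ p = -1) (hY : Y ^ q = -1) :
    Function.Injective
      (fun v : Fin (2 * N) → ℂ =>
        ((∑ i ∈ Finset.range p, X ^ i).mulVec v,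
          -((∑ i ∈ Finset.range q, Y ^ i).mulVec v))) ∧
    Function.Surjective
      (fun uw : (Fin (2 * N) → ℂ) × (Fin (2 * N) → ℂ) =>
        (X - 1).mulVec uw.1 + (Y - 1).mulVec uw.2) ∧
    {uw : (Fin (2 * N) → ℂ) × (Fin (2 * N) → ℂ) |
        (X - 1).mulVec uw.1 + (Y - 1).mulVec uw.2 = 0} =
      Set.range
        (fun v : Fin (2 * N) → ℂ =>
          ((∑ i ∈ Finset.range p, X ^ i).mulVec v,
            -((∑ i ∈ Finset.range q, Y ^ i).mulVec v))) := by
  have hc : (-2 : ℂ) ≠ 0 := by norm_num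
  have hXS := sub_one_mul_geom_sum_of_pow_eq_neg_one (K := ℂ) hX
  have hSX := geom_sum_mul_sub_one_of_pow_eq_neg_one (K := ℂ) hX
  have hYT := sub_one_mul_geom_sum_of_pow_eq_neg_one (K := ℂ) hY
  have hTY := geom_sum_mul_sub_one_of_pow_eq_neg_one (K := ℂ) hY
  exact ⟨boundaryTwo_injective hc hXS, boundaryOne_surjective hc hXS,
    setOf_boundaryOne_eq_zero hc hXS hSX hYT hTY⟩

theorem stmt_16 (N p q : ℕ) (hp : 0 < p) (hq : 0 < q)
    (X Y : Matrix (Fin (2 * N)) (Fin (2 * N)) ℂ)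
    (hX : X ^ p = -1) (hY : Y ^ q = -1) :
    Function.Injective
      (fun v : Fin (2 * N) → ℂ =>
        ((∑ i ∈ Finset.range p, X ^ i).mulVec v,
          -((∑ i ∈ Finset.range q, Y ^ i).mulVec v))) ∧
    Function.Surjective
      (fun uw : (Fin (2 * N) → ℂ) × (Fin (2 * N) → ℂ) =>
        (X - 1).mulVec uw.1 + (Y - 1).mulVec uw.2) ∧
    {uw : (Fin (2 * N) → ℂ) × (Fin (2 * N) → ℂ) |
        (X - 1).mulVec uw.1 + (Y - 1).mulVec uw.2 = 0} =
      Set.range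
        (fun v : Fin (2 * N) → ℂ =>
          ((∑ i ∈ Finset.range p, X ^ i).mulVec v,
            -((∑ i ∈ Finset.range q, Y ^ i).mulVec v))) :=
  stmt_16_general N p q X Y hX hY
end
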